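/- arXiv:2212.11479 — 2 statements merged into one kernel-verified Lean document; each statement's English description precedes it below -/
import Mathlib

section
/- Let $\{u(k)\}$, $\{\alpha(k)\}$, $\{q(k)\}$ be real sequences with $0<q(k)\le 1$, $\alpha(k)\ge 0$, $\sum_{k=0}^\infty q(k)=\infty$, $\lim_{k\to\infty}\alpha(k)/q(k)=0$, and $u(k+1)=(1-q(k))u(k)+\alpha(k)$. Then $\limsup_{k\to\infty}u(k)\le 0$; in particular, if $u(k)\ge 0$ for all $k$, then $\lim_{k\to\infty}u(k)=0$. -/
open Filter Finset

lemma key_le (u α q : ℕ → ℝ)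
    (hq : ∀ k, 0 < q k ∧ q k ≤ 1)
    (hα : ∀ k, 0 ≤ α k)
    (hqdiv : ¬ Summable q)
    (hlim : Filter.Tendsto (fun k => α k / q k) Filter.atTop (nhds 0))
    (hrec : ∀ k, u (k + 1) = (1 - q k) * u k + α k) :
    ∀ ε > 0, ∀ᶠ k in atTop, u k ≤ ε := by
  intro ε hε
  have hhalf : (0:ℝ) < ε / 2 := by positivity
  -- find N with α k ≤ (ε/2) * q k for k ≥ N
  have hev : ∀ᶠ k in atTop, α k / q k < ε / 2 :=
    hlim.eventually (eventually_lt_nhds hhalf)  -- guess name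
  obtain ⟨N, hN⟩ := hev.exists_forall_of_atTop
  have hαq : ∀ k, N ≤ k → α k ≤ (ε/2) * q k := by
    intro k hk
    have h1 := hN k hk
    have hq0 := (hq k).1
    calc α k = (α k / q k) * q k := by field_simp
    _ ≤ (ε/2) * q k := by
        apply mul_le_mul_of_nonneg_right (le_of_lt h1) hq0.le
  -- product bound
  set P : ℕ → ℝ := fun n => ∏ j ∈ range n, (1 - q (N + j)) with hP
  have hPnonneg : ∀ n, 0 ≤ P n := by
    intro n
    apply Finset.prod_nonneg
    intro j _
    linarith [(hq (N + j)).2]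
  have hstep : ∀ n, u (N + n) - ε/2 ≤ P n * (u N - ε/2) := by
    intro n
    induction n with
    | zero => simp [hP]
    | succ n ih =>
      have hqk := hq (N + n)
      have h1 : u (N + n + 1) - ε/2 ≤ (1 - q (N + n)) * (u (N + n) - ε/2) := by
        have h0 := hrec (N + n)
        have hα2 := hαq (N + n) (Nat.le_add_right _ _)
        nlinarith [hqk.1, hqk.2]
      have h2 : (1 - q (N + n)) * (u (N + n) - ε/2) ≤ (1 - q (N+n)) * (P n * (u N - ε/2)) := by
        apply mul_le_mul_of_nonneg_left ih
        linarith [hqk.2]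
      calc u (N + (n+1)) - ε/2 = u (N + n + 1) - ε/2 := rfl
      _ ≤ (1 - q (N+n)) * (u (N+n) - ε/2) := h1
      _ ≤ (1 - q (N+n)) * (P n * (u N - ε/2)) := h2
      _ = P (n+1) * (u N - ε/2) := by
          rw [hP]; simp [Finset.prod_range_succ]; ring
  -- P n ≤ exp (- sum)
  set S : ℕ → ℝ := fun n => ∑ j ∈ range n, q (N + j) with hS
  have hPexp : ∀ n, P n ≤ Real.exp (-S n) := by
    intro n
    rw [hS]
    simp only
    rw [← Finset.sum_neg_distrib, Real.exp_sum]
    apply Finset.prod_le_prod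
    · intro j _; linarith [(hq (N + j)).2]
    · intro j _; linarith [Real.add_one_le_exp (-(q (N + j)))]
  -- divergence of S
  have hsum : ¬ Summable (fun j => q (N + j)) := by
    intro h
    apply hqdiv
    have : Summable (fun j => q (j + N)) := by
      apply h.congr; intro j; rw [Nat.add_comm]
    exact (summable_nat_add_iff N).mp this
  have hStop : Tendsto S atTop atTop :=
    (not_summable_iff_tendsto_nat_atTop_of_nonneg (fun j => (hq (N + j)).1.le)).mp hsum
  have hexp : Tendsto (fun n => Real.exp (-S n)) atTop (nhds 0) :=
    Real.tendsto_exp_atBot.comp (tendsto_neg_atTop_atBot.comp hStop)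
  set M : ℝ := max (u N - ε/2) 0 with hM
  have hM0 : 0 ≤ M := le_max_right _ _
  have hmul : Tendsto (fun n => Real.exp (-S n) * M) atTop (nhds 0) := by
    simpa using hexp.mul_const M
  have hev2 : ∀ᶠ n in atTop, Real.exp (-S n) * M < ε/2 :=
    hmul.eventually (eventually_lt_nhds hhalf)
  have hev3 : ∀ᶠ n in atTop, u (N + n) ≤ ε := by
    filter_upwards [hev2] with n hn
    have h1 := hstep n
    have h2 : P n * (u N - ε/2) ≤ P n * M :=
      mul_le_mul_of_nonneg_left (le_max_left _ _) (hPnonneg n)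
    have h3 : P n * M ≤ Real.exp (-S n) * M :=
      mul_le_mul_of_nonneg_right (hPexp n) hM0
    linarith
  obtain ⟨n0, hn0⟩ := hev3.exists_forall_of_atTop
  rw [eventually_atTop]
  refine ⟨N + n0, fun k hk => ?_⟩
  have : u (N + (k - N)) ≤ ε := hn0 (k - N) (by omega)
  rwa [show N + (k - N) = k by omega] at this

theorem stmt_0 (u α q : ℕ → ℝ)
    (hq : ∀ k, 0 < q k ∧ q k ≤ 1)
    (hα : ∀ k, 0 ≤ α k)
    (hqdiv : ¬ Summable q)
    (hlim : Filter.Tendsto (fun k => α k / q k) Filter.atTop (nhds 0))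
    (hrec : ∀ k, u (k + 1) = (1 - q k) * u k + α k) :
    Filter.limsup u Filter.atTop ≤ 0 ∧
      ((∀ k, 0 ≤ u k) → Filter.Tendsto u Filter.atTop (nhds 0)) := by
  have key := key_le u α q hq hα hqdiv hlim hrec
  -- lower bound on u
  have hbelow : ∀ k, min (u 0) 0 ≤ u k := by
    intro k
    induction k with
    | zero => exact min_le_left _ _
    | succ k ih =>
      have hqk := hq k
      have hm : min (u 0) 0 ≤ 0 := min_le_right _ _
      rw [hrec k]
      nlinarith [hα k, hqk.1, hqk.2]
  have hcob : Filter.IsCoboundedUnder (· ≤ ·) atTop u :=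
    Filter.isCoboundedUnder_le_of_le atTop hbelow
  have hlimsup : Filter.limsup u Filter.atTop ≤ 0 := by
    apply le_of_forall_pos_le_add
    intro ε hε
    rw [zero_add]
    exact Filter.limsup_le_of_le hcob (key ε hε)
  refine ⟨hlimsup, fun hpos => ?_⟩
  have hbddabove : Filter.IsBoundedUnder (· ≤ ·) atTop u := ⟨1, key 1 one_pos⟩
  have hbddbelow : Filter.IsBoundedUnder (· ≥ ·) atTop u :=
    Filter.isBoundedUnder_of ⟨min (u 0) 0, fun k => hbelow k⟩
  have hliminf : (0:ℝ) ≤ Filter.liminf u Filter.atTop := by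
    apply Filter.le_liminf_of_le hbddabove.isCoboundedUnder_ge
    exact Filter.Eventually.of_forall hpos
  exact tendsto_of_le_liminf_of_limsup_le hliminf hlimsup hbddabove hbddbelow
end

section
/- For any given $c,k_0>0$, $0<p<1$, and $q\in\mathbb{R}$, there exist a constant $A>0$ and threshold $K$ such that for all $k>K$: $\sum_{l=1}^{k}\frac{\exp\left(c(l+k_0)^p\right)}{(l+k_0)^q} \le A\cdot\frac{\exp\left(c(k+k_0)^p\right)}{(k+k_0)^{p+q-1}}.$ -/
open Real Filter Set

private lemma rpow_incr_le {p k0 : ℝ} (hp0 : 0 < p) (hp1 : p < 1) (hk0 : 0 < k0)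
    {x : ℝ} (hx : k0 ≤ x) : (x + 1) ^ p - x ^ p ≤ p * k0 ^ (p - 1) := by
  have hx0 : 0 < x := lt_of_lt_of_le hk0 hx
  obtain ⟨ξ, hξ, hslope⟩ := exists_hasDerivAt_eq_slope (fun y => y ^ p)
    (fun y => p * y ^ (p - 1)) (by linarith : x < x + 1)
    (fun y hy => (Real.continuousAt_rpow_const y p
      (Or.inl (by rcases hy with ⟨h1, _⟩; nlinarith))).continuousWithinAt)
    (fun y hy => Real.hasDerivAt_rpow_const
      (Or.inl (by rcases hy with ⟨h1, _⟩; nlinarith)))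
  have hξx : x < ξ := hξ.1
  have hξ0 : 0 < ξ := lt_trans hx0 hξx
  have : (x + 1) ^ p - x ^ p = p * ξ ^ (p - 1) := by rw [hslope]; ring
  rw [this]
  have hb : ξ ^ (p - 1) ≤ k0 ^ (p - 1) :=
    Real.rpow_le_rpow_of_nonpos hk0 (by linarith) (by linarith)
  nlinarith [hb, hp0.le]

private lemma step_lemma (c k0 p q : ℝ) (hc : 0 < c) (hk0 : 0 < k0)
    (hp0 : 0 < p) (hp1 : p < 1) {x : ℝ} (hx1 : 1 ≤ x) (hxk0 : k0 ≤ x)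
    (hcond : (p + q - 1) * x ^ (-p) ≤ c * p / 2) :
    c * p / 2 * Real.exp (-(c * p * k0 ^ (p - 1))) * (2:ℝ) ^ (-|q|) *
        (Real.exp (c * (x + 1) ^ p) * (x + 1) ^ (-q)) ≤
      Real.exp (c * (x + 1) ^ p) * (x + 1) ^ (-(p + q - 1)) -
        Real.exp (c * x ^ p) * x ^ (-(p + q - 1)) := by
  have hx0 : 0 < x := lt_of_lt_of_le (by linarith) hx1
  set t := p + q - 1 with ht
  clear_value t
  -- MVT for g
  have hderiv : ∀ y : ℝ, 0 < y → HasDerivAt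
      (fun y => Real.exp (c * y ^ p) * y ^ (-t))
      (Real.exp (c * y ^ p) * (c * (p * y ^ (p - 1))) * y ^ (-t) +
        Real.exp (c * y ^ p) * (-t * y ^ (-t - 1))) y := by
    intro y hy
    exact (((Real.hasDerivAt_rpow_const (Or.inl hy.ne')).const_mul c).exp).mul
      (Real.hasDerivAt_rpow_const (Or.inl hy.ne'))
  obtain ⟨ξ, hξ, hslope⟩ := exists_hasDerivAt_eq_slope
    (fun y => Real.exp (c * y ^ p) * y ^ (-t))
    (fun y => Real.exp (c * y ^ p) * (c * (p * y ^ (p - 1))) * y ^ (-t) +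
        Real.exp (c * y ^ p) * (-t * y ^ (-t - 1)))
    (by linarith : x < x + 1)
    (fun y hy => (hderiv y (lt_of_lt_of_le hx0 hy.1)).continuousAt.continuousWithinAt)
    (fun y hy => hderiv y (lt_trans hx0 hy.1))
  have hξx : x < ξ := hξ.1
  have hξx1 : ξ < x + 1 := hξ.2
  have hξ0 : 0 < ξ := lt_trans hx0 hξx
  rw [add_sub_cancel_left, div_one] at hslope
  rw [← hslope]
  -- rewrite derivative as exp(c ξ^p) * ξ^(-q) * (c*p - t * ξ^(-p))
  have hrw : Real.exp (c * ξ ^ p) * (c * (p * ξ ^ (p - 1))) * ξ ^ (-t) +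
      Real.exp (c * ξ ^ p) * (-t * ξ ^ (-t - 1)) =
      Real.exp (c * ξ ^ p) * ξ ^ (-q) * (c * p - t * ξ ^ (-p)) := by
    have h1 : ξ ^ (p - 1) * ξ ^ (-t) = ξ ^ (-q) := by
      rw [← Real.rpow_add hξ0]; congr 1; rw [ht]; ring
    have h2 : ξ ^ (-t - 1) = ξ ^ (-q) * ξ ^ (-p) := by
      rw [← Real.rpow_add hξ0]; congr 1; rw [ht]; ring
    rw [h2]; linear_combination Real.exp (c * ξ ^ p) * c * p * h1
  rw [hrw]
  -- bound the bracket from below by c*p/2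
  have hbrk : c * p / 2 ≤ c * p - t * ξ ^ (-p) := by
    rcases le_or_gt t 0 with h | h
    · have : t * ξ ^ (-p) ≤ 0 :=
        mul_nonpos_of_nonpos_of_nonneg h (Real.rpow_nonneg hξ0.le _)
      nlinarith [mul_pos hc hp0]
    · have : ξ ^ (-p) ≤ x ^ (-p) :=
        Real.rpow_le_rpow_of_nonpos hx0 hξx.le (by linarith)
      nlinarith
  -- bound exp(c ξ^p) from below
  have hexp : Real.exp (c * (x + 1) ^ p) * Real.exp (-(c * p * k0 ^ (p - 1))) ≤
      Real.exp (c * ξ ^ p) := by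
    rw [← Real.exp_add, Real.exp_le_exp]
    have h1 : (x + 1) ^ p - x ^ p ≤ p * k0 ^ (p - 1) := rpow_incr_le hp0 hp1 hk0 hxk0
    have h2 : x ^ p ≤ ξ ^ p := Real.rpow_le_rpow hx0.le hξx.le hp0.le
    nlinarith
  -- bound ξ^(-q) from below
  have hpow : (2:ℝ) ^ (-|q|) * (x + 1) ^ (-q) ≤ ξ ^ (-q) := by
    rcases le_or_gt 0 q with h | h
    · rw [abs_of_nonneg h]
      have h1 : (x + 1) ^ (-q) ≤ ξ ^ (-q) :=
        Real.rpow_le_rpow_of_nonpos hξ0 hξx1.le (by linarith)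
      have h2 : (2:ℝ) ^ (-q) ≤ 1 := by
        rw [← Real.rpow_zero 2]
        exact Real.rpow_le_rpow_of_exponent_le one_le_two (by linarith)
      nlinarith [Real.rpow_nonneg (by linarith : (0:ℝ) ≤ x + 1) (-q)]
    · rw [abs_of_neg h, neg_neg]
      have key : (2:ℝ) ^ q * (x + 1) ^ (-q) = ((x + 1) / 2) ^ (-q) := by
        rw [Real.div_rpow (by linarith) (by norm_num : (0:ℝ) ≤ 2)]
        rw [Real.rpow_neg (by norm_num : (0:ℝ) ≤ 2)]
        field_simp
      rw [key]
      exact Real.rpow_le_rpow (by linarith) (by linarith) (by linarith)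
  -- combine
  have e1 : (0:ℝ) < Real.exp (c * ξ ^ p) := Real.exp_pos _
  have e2 : (0:ℝ) ≤ ξ ^ (-q) := Real.rpow_nonneg hξ0.le _
  calc c * p / 2 * Real.exp (-(c * p * k0 ^ (p - 1))) * (2:ℝ) ^ (-|q|) *
        (Real.exp (c * (x + 1) ^ p) * (x + 1) ^ (-q))
      = (Real.exp (c * (x + 1) ^ p) * Real.exp (-(c * p * k0 ^ (p - 1)))) *
        ((2:ℝ) ^ (-|q|) * (x + 1) ^ (-q)) * (c * p / 2) := by ring
    _ ≤ Real.exp (c * ξ ^ p) * ξ ^ (-q) * (c * p - t * ξ ^ (-p)) := by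
        apply mul_le_mul
        · apply mul_le_mul hexp hpow
          · positivity
          · exact e1.le
        · exact hbrk
        · positivity
        · positivity

theorem stmt_4 (c k0 p q : ℝ) (hc : 0 < c) (hk0 : 0 < k0) (hp0 : 0 < p) (hp1 : p < 1) :
    ∃ A : ℝ, 0 < A ∧ ∃ K : ℕ, ∀ k : ℕ, K < k →
      ∑ l ∈ Finset.Icc 1 k, Real.exp (c * ((l : ℝ) + k0) ^ p) / ((l : ℝ) + k0) ^ q ≤
        A * (Real.exp (c * ((k : ℝ) + k0) ^ p) / ((k : ℝ) + k0) ^ (p + q - 1)) := by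
  classical
  set ε := c * p / 2 * Real.exp (-(c * p * k0 ^ (p - 1))) * (2:ℝ) ^ (-|q|) with hε
  have hε0 : 0 < ε := by positivity
  -- threshold from the tendsto condition
  have htend : Tendsto (fun x : ℝ => (p + q - 1) * x ^ (-p)) atTop (nhds 0) := by
    have h := (tendsto_rpow_neg_atTop hp0).const_mul (p + q - 1)
    simpa using h
  have hev : ∀ᶠ x : ℝ in atTop, (p + q - 1) * x ^ (-p) ≤ c * p / 2 :=
    (htend.eventually_lt_const (by positivity)).mono fun x hx => hx.le
  obtain ⟨X0, hX0⟩ := eventually_atTop.mp hev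
  obtain ⟨K0, hK0⟩ := exists_nat_ge (max X0 1)
  have hK0X : X0 ≤ (K0:ℝ) := le_trans (le_max_left _ _) hK0
  have hK01 : (1:ℝ) ≤ (K0:ℝ) := le_trans (le_max_right _ _) hK0
  -- notation
  set F : ℕ → ℝ := fun k => Real.exp (c * ((k:ℝ) + k0) ^ p) / ((k:ℝ) + k0) ^ q with hF
  set G : ℕ → ℝ := fun k => Real.exp (c * ((k:ℝ) + k0) ^ p) * ((k:ℝ) + k0) ^ (-(p + q - 1))
    with hG
  have hGpos : ∀ k : ℕ, 0 < G k := by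
    intro k
    have : (0:ℝ) < (k:ℝ) + k0 := by positivity
    simp only [hG]
    positivity
  set S : ℕ → ℝ := fun k => ∑ l ∈ Finset.Icc 1 k, F l with hS
  set A := max ε⁻¹ (S K0 / G K0) with hA
  have hA0 : 0 < A := lt_of_lt_of_le (by positivity) (le_max_left _ _)
  have hAε : ε⁻¹ ≤ A := le_max_left _ _
  -- key step inequality for k ≥ K0
  have hstep : ∀ k : ℕ, K0 ≤ k → ε * F (k + 1) ≤ G (k + 1) - G k := by
    intro k hk
    have hkK : (K0:ℝ) ≤ (k:ℝ) := Nat.cast_le.mpr hk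
    have hx1 : (1:ℝ) ≤ (k:ℝ) + k0 := by linarith [hk0.le]
    have hxk0 : k0 ≤ (k:ℝ) + k0 := le_add_of_nonneg_left (Nat.cast_nonneg k)
    have hcond : (p + q - 1) * ((k:ℝ) + k0) ^ (-p) ≤ c * p / 2 :=
      hX0 _ (by linarith [hk0.le])
    have key := step_lemma c k0 p q hc hk0 hp0 hp1 hx1 hxk0 hcond
    have hcast : ((k:ℝ) + k0) + 1 = ((k + 1 : ℕ):ℝ) + k0 := by push_cast; ring
    rw [hcast] at key
    have hpos : (0:ℝ) < ((k + 1 : ℕ):ℝ) + k0 := by positivity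
    have hFrw : F (k + 1) = Real.exp (c * (((k + 1 : ℕ):ℝ) + k0) ^ p) *
        (((k + 1 : ℕ):ℝ) + k0) ^ (-q) := by
      simp only [hF]
      rw [Real.rpow_neg hpos.le, div_eq_mul_inv]
    rw [hFrw]
    exact key
  have hGmono : ∀ k : ℕ, K0 ≤ k → G k ≤ G (k + 1) := by
    intro k hk
    have h := hstep k hk
    have hF0 : 0 ≤ F (k + 1) := by
      have : (0:ℝ) < ((k + 1:ℕ):ℝ) + k0 := by positivity
      simp only [hF]
      positivity
    nlinarith
  -- induction
  have main : ∀ n : ℕ, S (K0 + n) ≤ A * G (K0 + n) := by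
    intro n
    induction n with
    | zero =>
      simp only [Nat.add_zero]
      calc S K0 = S K0 / G K0 * G K0 := (div_mul_cancel₀ _ (hGpos K0).ne').symm
        _ ≤ A * G K0 := mul_le_mul_of_nonneg_right (le_max_right _ _) (hGpos K0).le
    | succ n ih =>
      have h1 : S (K0 + n + 1) = S (K0 + n) + F (K0 + n + 1) := by
        simp only [hS]
        exact Finset.sum_Icc_succ_top (by omega) F
      have h2 := hstep (K0 + n) (Nat.le_add_right _ _)
      have h3 : F (K0 + n + 1) ≤ ε⁻¹ * (G (K0 + n + 1) - G (K0 + n)) := by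
        have := mul_le_mul_of_nonneg_left h2 (inv_nonneg.mpr hε0.le)
        rw [← mul_assoc, inv_mul_cancel₀ hε0.ne', one_mul] at this
        exact this
      have h4 : G (K0 + n + 1) - G (K0 + n) ≥ 0 := by
        linarith [hGmono (K0 + n) (Nat.le_add_right _ _)]
      have h5 : ε⁻¹ * (G (K0 + n + 1) - G (K0 + n)) ≤ A * (G (K0 + n + 1) - G (K0 + n)) :=
        mul_le_mul_of_nonneg_right hAε h4
      show S (K0 + n + 1) ≤ A * G (K0 + n + 1)
      rw [h1]
      linarith
  refine ⟨A, hA0, K0, fun k hk => ?_⟩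
  have hk' : K0 ≤ k := hk.le
  obtain ⟨n, rfl⟩ := Nat.exists_eq_add_of_le hk'
  have := main n
  have hpos : (0:ℝ) < ((K0 + n : ℕ):ℝ) + k0 := by positivity
  calc ∑ l ∈ Finset.Icc 1 (K0 + n), Real.exp (c * ((l : ℝ) + k0) ^ p) / ((l : ℝ) + k0) ^ q
      = S (K0 + n) := rfl
    _ ≤ A * G (K0 + n) := this
    _ = A * (Real.exp (c * (((K0 + n : ℕ)) + k0) ^ p) / (((K0 + n : ℕ):ℝ) + k0) ^ (p + q - 1)) := by
        simp only [hG]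
        rw [Real.rpow_neg hpos.le, div_eq_mul_inv]
end
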